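/- arXiv:1709.06619 — 7 statements merged into one kernel-verified Lean document; each statement's English description precedes it below -/
import Mathlib

section
/- Let ω ∈ [0, π/2). For every nonzero complex number λ with |arg λ| ≤ ω and every complex number w with Re w ≥ 0, one has |w + λ| ≥ cos(ω) · max(|w|, |λ|). -/
open Real Complex

/-! The bound `cos ω * ‖λ‖ ≤ ‖w + λ‖` is read off the real parts, since `Re λ ≥ cos ω * ‖λ‖`.
For `cos ω * ‖w‖ ≤ ‖w + λ‖`: as `Re w, Re λ ≥ 0` and `|Im λ| ≤ sin ω * ‖λ‖`, the real inner product
of `w` and `λ` is at least `-sin ω * ‖w‖ * ‖λ‖`, so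
`‖w + λ‖² ≥ ‖w‖² - 2 sin ω ‖w‖ ‖λ‖ + ‖λ‖² = cos² ω ‖w‖² + (sin ω ‖w‖ - ‖λ‖)²`. -/

theorem mul_norm_le_norm_add_of_neg_mul_le_inner {E : Type*} [NormedAddCommGroup E]
    [InnerProductSpace ℝ E] {x y : E} {c s : ℝ} (hcs : c ^ 2 + s ^ 2 = 1)
    (hxy : -(s * ‖x‖ * ‖y‖) ≤ inner ℝ x y) : c * ‖x‖ ≤ ‖x + y‖ := by
  refine le_of_pow_le_pow_left₀ two_ne_zero (norm_nonneg _) ?_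
  have hc : c ^ 2 = 1 - s ^ 2 := by linarith
  rw [norm_add_sq_real, mul_pow, hc]
  nlinarith [sq_nonneg (s * ‖x‖ - ‖y‖)]

namespace Complex

theorem cos_mul_norm_le_re {z : ℂ} {ω : ℝ} (hz : |arg z| ≤ ω) (hω : ω ≤ π) :
    Real.cos ω * ‖z‖ ≤ z.re := by
  rw [← norm_mul_cos_arg, mul_comm, ← Real.cos_abs (arg z)]
  gcongr
  exact Real.cos_le_cos_of_nonneg_of_le_pi (abs_nonneg _) hω hz

theorem abs_im_le_sin_mul_norm {z : ℂ} {ω : ℝ} (hz : |arg z| ≤ ω) (hω : ω ≤ π / 2) :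
    |z.im| ≤ Real.sin ω * ‖z‖ := by
  obtain ⟨hlower, hupper⟩ := abs_le.mp hz
  have hsin : |Real.sin (arg z)| ≤ Real.sin ω := by
    refine abs_le.mpr ⟨?_, Real.sin_le_sin_of_le_of_le_pi_div_two (by linarith) hω hupper⟩
    rw [← Real.sin_neg]
    exact Real.sin_le_sin_of_le_of_le_pi_div_two (by linarith) (by linarith) hlower
  rw [← norm_mul_sin_arg, abs_mul, abs_norm, mul_comm]
  gcongr

theorem neg_mul_le_inner_of_re_nonneg {w z : ℂ} {s : ℝ} (hw : 0 ≤ w.re) (hz : 0 ≤ z.re)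
    (hzim : |z.im| ≤ s * ‖z‖) : -(s * ‖w‖ * ‖z‖) ≤ inner ℝ w z := by
  have him : -(s * ‖w‖ * ‖z‖) ≤ w.im * z.im :=
    calc -(s * ‖w‖ * ‖z‖) ≤ -(‖w‖ * |z.im|) := by
          linarith [mul_le_mul_of_nonneg_left hzim (norm_nonneg w)]
      _ ≤ -(|w.im| * |z.im|) := by gcongr; exact abs_im_le_norm w
      _ ≤ w.im * z.im := by rw [← abs_mul]; exact neg_abs_le _
  rw [Complex.inner, mul_re, conj_re, conj_im]
  linarith [mul_nonneg hw hz]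

end Complex

theorem sector_add_lower_bound_general
    (ω : ℝ) (hωlt : ω < π / 2)
    (lam : ℂ) (harg : |Complex.arg lam| ≤ ω)
    (w : ℂ) (hw : 0 ≤ w.re) :
    Real.cos ω * max ‖w‖ ‖lam‖ ≤ ‖w + lam‖ := by
  have hω0 : 0 ≤ ω := (abs_nonneg _).trans harg
  have hcos : 0 ≤ Real.cos ω := Real.cos_nonneg_of_mem_Icc ⟨by linarith [pi_pos], hωlt.le⟩
  have hre : Real.cos ω * ‖lam‖ ≤ lam.re := cos_mul_norm_le_re harg (by linarith [pi_pos])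
  have him : |lam.im| ≤ Real.sin ω * ‖lam‖ := abs_im_le_sin_mul_norm harg hωlt.le
  rw [mul_max_of_nonneg _ _ hcos]
  refine max_le ?_ ?_
  · exact mul_norm_le_norm_add_of_neg_mul_le_inner (cos_sq_add_sin_sq ω)
      (neg_mul_le_inner_of_re_nonneg hw ((mul_nonneg hcos (norm_nonneg _)).trans hre) him)
  · calc Real.cos ω * ‖lam‖ ≤ lam.re := hre
      _ ≤ (w + lam).re := by rw [add_re]; linarith
      _ ≤ ‖w + lam‖ := re_le_norm _

/-- For `ω ∈ [0, π/2)`, every nonzero `λ` with `|arg λ| ≤ ω` and every `w` with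
`Re w ≥ 0`, one has `|w + λ| ≥ cos ω · max (|w|, |λ|)`. -/
theorem sector_add_lower_bound
    (ω : ℝ) (hω0 : 0 ≤ ω) (hωlt : ω < π / 2)
    (lam : ℂ) (hlam : lam ≠ 0) (harg : |Complex.arg lam| ≤ ω)
    (w : ℂ) (hw : 0 ≤ w.re) :
    Real.cos ω * max ‖w‖ ‖lam‖ ≤ ‖w + lam‖ :=
  sector_add_lower_bound_general ω hωlt lam harg w hw
end

section
/- Let β ∈ (0,1), s ∈ [0, β), ω ∈ [0, π/2) and c0 > 0. There exists a constant C > 0, depending only on β, s, ω and c0 (one may take C = (cos ω)^{-1} max(1, c0^{s-1})), such that for every λ ∈ S_ω with Re λ ≥ c0 and every z ∈ ℂ with |Im z| ≤ π/2, |e^{(1-β)z} λ^s (e^z + λ)^{-1}| ≤ C e^{(s-β) Re z} when Re z > 0, and |e^{(1-β)z} λ^s (e^z + λ)^{-1}| ≤ C e^{(1-β) Re z} when Re z ≤ 0. -/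
open Real Complex ComplexConjugate

/-! The angle between `e^z` and `λ` is at most `π/2 + ω`, which forces
`|e^z + λ| ≥ cos ω · max (e^{Re z}, |λ|)`. It remains to compare the numerator
`e^{(1-β) Re z} |λ|^s` with this maximum: for `Re z > 0` by weighted AM–GM,
`|λ|^s e^{(1-s) Re z} ≤ max (e^{Re z}, |λ|)`, and for `Re z ≤ 0` by
`|λ|^s = |λ|^{s-1} |λ| ≤ c0^{s-1} |λ|`. -/

theorem Real.neg_sin_le_cos_of_abs_le {x ω : ℝ} (hω : ω ≤ π / 2) (hx : |x| ≤ ω + π / 2) :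
    -Real.sin ω ≤ Real.cos x := by
  calc -Real.sin ω = Real.cos (ω + π / 2) := (Real.cos_add_pi_div_two ω).symm
    _ ≤ Real.cos |x| :=
      Real.cos_le_cos_of_nonneg_of_le_pi (abs_nonneg x) (by linarith) hx
    _ = Real.cos x := Real.cos_abs x

theorem Complex.re_exp_mul_conj (z w : ℂ) :
    (exp z * conj w).re = Real.exp z.re * ‖w‖ * Real.cos (z.im - arg w) := by
  rw [mul_re, conj_re, conj_im, exp_re, exp_im, Real.cos_sub, ← norm_mul_cos_arg w,
    ← norm_mul_sin_arg w]
  ring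

theorem Complex.cos_mul_max_norm_le_norm_add {u v : ℂ} {ω : ℝ}
    (h : -(Real.sin ω * (‖u‖ * ‖v‖)) ≤ (u * conj v).re) :
    Real.cos ω * max ‖u‖ ‖v‖ ≤ ‖u + v‖ := by
  -- `‖u + v‖² - (cos ω ‖u‖)² = (‖v‖ - sin ω ‖u‖)² + 2 (Re (u v̄) + sin ω ‖u‖ ‖v‖)`
  have hsq : (Real.cos ω * max ‖u‖ ‖v‖) ^ 2 ≤ ‖u + v‖ ^ 2 := by
    rw [← normSq_eq_norm_sq, normSq_add, normSq_eq_norm_sq, normSq_eq_norm_sq]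
    have hpyth := Real.sin_sq_add_cos_sq ω
    rcases max_cases ‖u‖ ‖v‖ with ⟨hmax, -⟩ | ⟨hmax, -⟩ <;> rw [hmax]
    · nlinarith [sq_nonneg (‖v‖ - Real.sin ω * ‖u‖)]
    · nlinarith [sq_nonneg (‖u‖ - Real.sin ω * ‖v‖)]
  exact (abs_le_of_sq_le_sq' hsq (norm_nonneg _)).2

theorem Complex.cos_mul_max_le_norm_exp_add {z w : ℂ} {ω : ℝ} (hω : ω ≤ π / 2)
    (hz : |z.im| ≤ π / 2) (hw : |arg w| ≤ ω) :
    Real.cos ω * max (Real.exp z.re) ‖w‖ ≤ ‖exp z + w‖ := by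
  have hangle : |z.im - arg w| ≤ ω + π / 2 := by
    linarith [abs_sub z.im (arg w)]
  have hcos := Real.neg_sin_le_cos_of_abs_le hω hangle
  rw [← norm_exp z]
  refine cos_mul_max_norm_le_norm_add ?_
  rw [re_exp_mul_conj, norm_exp]
  nlinarith [mul_nonneg (Real.exp_pos z.re).le (norm_nonneg w)]

theorem Real.rpow_mul_rpow_one_sub_le_max {a b s : ℝ} (ha : 0 ≤ a) (hb : 0 ≤ b)
    (hs₀ : 0 ≤ s) (hs₁ : s ≤ 1) : a ^ s * b ^ (1 - s) ≤ max a b :=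
  calc a ^ s * b ^ (1 - s) ≤ s * a + (1 - s) * b :=
        Real.geom_mean_le_arith_mean2_weighted hs₀ (by linarith) ha hb (by ring)
    _ ≤ s * max a b + (1 - s) * max a b := by
        nlinarith [le_max_left a b, le_max_right a b]
    _ = max a b := by ring

theorem Real.rpow_le_max_one_rpow_sub_one_mul {c r s : ℝ} (hc : 0 < c) (hcr : c ≤ r)
    (hs : s ≤ 1) : r ^ s ≤ max 1 (c ^ (s - 1)) * r := by
  have hr : 0 < r := hc.trans_le hcr
  calc r ^ s = r ^ (s - 1) * r := by
        rw [← Real.rpow_add_one hr.ne', sub_add_cancel]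
    _ ≤ c ^ (s - 1) * r :=
        mul_le_mul_of_nonneg_right (Real.rpow_le_rpow_of_nonpos hc hcr (by linarith)) hr.le
    _ ≤ max 1 (c ^ (s - 1)) * r := by gcongr; exact le_max_right _ _

theorem Complex.norm_exp_mul_cpow_mul_inv_exp_add_le {β s ω : ℝ} {z w : ℂ}
    (hω : ω ≤ π / 2) (hcos : 0 < Real.cos ω) (hz : |z.im| ≤ π / 2) (hw : |arg w| ≤ ω) :
    ‖exp ((1 - β) * z) * w ^ (s : ℂ) * (exp z + w)⁻¹‖ ≤
      (Real.cos ω)⁻¹ * (Real.exp ((1 - β) * z.re) * ‖w‖ ^ s / max (Real.exp z.re) ‖w‖) := by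
  have hden := cos_mul_max_le_norm_exp_add hω hz hw
  have hre : (((1 : ℂ) - β) * z).re = (1 - β) * z.re := by simp
  rw [norm_mul, norm_mul, norm_inv, norm_cpow_real, norm_exp, hre, ← div_eq_mul_inv,
    inv_mul_eq_div, div_div]
  gcongr
  rwa [mul_comm]

theorem Real.exp_mul_rpow_le_exp_mul_max {β s x r : ℝ} (hr : 0 ≤ r) (hs₀ : 0 ≤ s)
    (hs₁ : s ≤ 1) :
    Real.exp ((1 - β) * x) * r ^ s ≤ Real.exp ((s - β) * x) * max (Real.exp x) r :=
  calc Real.exp ((1 - β) * x) * r ^ s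
      = Real.exp ((s - β) * x) * (r ^ s * Real.exp x ^ (1 - s)) := by
        rw [← Real.exp_mul, mul_left_comm, ← Real.exp_add]
        ring_nf
    _ ≤ Real.exp ((s - β) * x) * max (Real.exp x) r := by
        gcongr
        exact (Real.rpow_mul_rpow_one_sub_le_max hr (Real.exp_pos x).le hs₀ hs₁).trans
          (max_comm _ _).le

/-- Scalar integrand estimate (Lemma 3.1): for `β ∈ (0,1)`, `s ∈ [0,β)`,
`ω ∈ [0,π/2)` and `c0 > 0`, with `C = (cos ω)⁻¹ max(1, c0^{s-1})`, for every
`λ ∈ S_ω` with `Re λ ≥ c0` and every `z` with `|Im z| ≤ π/2`,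
`|e^{(1-β)z} λ^s (e^z+λ)⁻¹| ≤ C e^{(s-β) Re z}` when `Re z > 0` and
`≤ C e^{(1-β) Re z}` when `Re z ≤ 0`. -/
theorem scalar_integrand_estimate
    (β s ω c0 : ℝ) (hβ : β ∈ Set.Ioo 0 1) (hs : s ∈ Set.Ico 0 β)
    (hω0 : 0 ≤ ω) (hωlt : ω < π / 2) (hc0 : 0 < c0) :
    ∃ C : ℝ, 0 < C ∧ C = (Real.cos ω)⁻¹ * max 1 (c0 ^ (s - 1)) ∧
      ∀ lam : ℂ, lam ≠ 0 → |Complex.arg lam| ≤ ω → c0 ≤ lam.re →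
        ∀ z : ℂ, |z.im| ≤ π / 2 →
          (0 < z.re →
            ‖Complex.exp (((1 : ℂ) - β) * z) * lam ^ (s : ℂ) *
                (Complex.exp z + lam)⁻¹‖ ≤ C * Real.exp ((s - β) * z.re)) ∧
          (z.re ≤ 0 →
            ‖Complex.exp (((1 : ℂ) - β) * z) * lam ^ (s : ℂ) *
                (Complex.exp z + lam)⁻¹‖ ≤ C * Real.exp ((1 - β) * z.re)) := by
  have hs₁ : s ≤ 1 := by linarith [hs.2, hβ.2]
  have hcos : 0 < Real.cos ω := Real.cos_pos_of_mem_Ioo ⟨by linarith [Real.pi_pos], hωlt⟩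
  set M := max 1 (c0 ^ (s - 1))
  have hM : 1 ≤ M := le_max_left _ _
  refine ⟨(Real.cos ω)⁻¹ * M, by positivity, rfl, fun lam _ harg hre z hz => ?_⟩
  set m := max (Real.exp z.re) ‖lam‖
  have hm : 0 < m := lt_max_of_lt_left (Real.exp_pos _)
  have hbound : ∀ t, Real.exp ((1 - β) * z.re) * ‖lam‖ ^ s ≤ M * Real.exp t * m →
      ‖exp ((1 - β) * z) * lam ^ (s : ℂ) * (exp z + lam)⁻¹‖ ≤
        (Real.cos ω)⁻¹ * M * Real.exp t := fun t ht => by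
    refine (norm_exp_mul_cpow_mul_inv_exp_add_le hωlt.le hcos hz harg).trans ?_
    rw [mul_assoc]
    gcongr
    exact (div_le_iff₀ hm).2 ht
  refine ⟨fun _ => hbound _ ?_, fun _ => hbound _ ?_⟩
  · calc Real.exp ((1 - β) * z.re) * ‖lam‖ ^ s ≤ Real.exp ((s - β) * z.re) * m :=
          Real.exp_mul_rpow_le_exp_mul_max (norm_nonneg lam) hs.1 hs₁
      _ ≤ M * Real.exp ((s - β) * z.re) * m := by
          gcongr
          exact le_mul_of_one_le_left (Real.exp_pos _).le hM
  · calc Real.exp ((1 - β) * z.re) * ‖lam‖ ^ s ≤ Real.exp ((1 - β) * z.re) * (M * ‖lam‖) := by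
          gcongr
          exact Real.rpow_le_max_one_rpow_sub_one_mul hc0 (hre.trans (re_le_norm lam)) hs₁
      _ ≤ M * Real.exp ((1 - β) * z.re) * m := by
          rw [mul_left_comm, ← mul_assoc]
          gcongr
          exact le_max_right _ _
end

section
/- Let β ∈ (0,1), s ∈ [0, β), ω ∈ [0, π/2) and c0 > 0, and for λ ∈ S_ω with Re λ ≥ c0 define F_λ(z) = e^{(1-β)z} λ^s (e^z + λ)^{-1}. There exists a constant C > 0 depending only on β, s, ω and c0 such that for every such λ: (a) for every t ∈ ℝ, ∫_{-π/2}^{π/2} |F_λ(t + i y)| dy ≤ π C; (b) ∫_{-∞}^{∞} ( |F_λ(y - i π/2)| + |F_λ(y + i π/2)| ) dy ≤ 2 C ( (β - s)^{-1} + (1 - β)^{-1} ); (c) ∫_{-π/2}^{π/2} |F_λ(t + i y)| dy → 0 as |t| → ∞. -/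
/-!
On the closed band `|Im z| ≤ π / 2` the point `e^z` lies in the closed right half-plane and `λ`
in the sector `S_ω`, so `|e^z + λ| ≥ max (e^{Re z}, |λ|) / (1 + 1 / cos ω)`. Hence
`|F_λ(z)| ≤ (1 + 1 / cos ω) |λ|^{s-β} min (e^{(1-β)u}, e^{-βu})` with `u = Re z - log |λ|`.
This two-sided exponential envelope is at most `1`, has integral `1/(1-β) + 1/β`, and tends to
`0` as `|u| → ∞`, while `|λ|^{s-β} ≤ c0^{s-β}` because `|λ| ≥ Re λ ≥ c0` and `s < β`.
-/

open Real Complex MeasureTheory Filter Set Topology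

noncomputable def twoSidedExp (a b u : ℝ) : ℝ := min (Real.exp (a * u)) (Real.exp (-(b * u)))

section twoSidedExp

variable {a b : ℝ}

lemma twoSidedExp_le_one (ha : 0 ≤ a) (hb : 0 ≤ b) (u : ℝ) : twoSidedExp a b u ≤ 1 := by
  rcases le_total u 0 with hu | hu
  · exact (min_le_left _ _).trans (Real.exp_le_one_iff.mpr (mul_nonpos_of_nonneg_of_nonpos ha hu))
  · exact (min_le_right _ _).trans (Real.exp_le_one_iff.mpr (neg_nonpos.mpr (mul_nonneg hb hu)))

lemma twoSidedExp_of_nonpos (ha : 0 ≤ a) (hb : 0 ≤ b) {u : ℝ} (hu : u ≤ 0) :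
    twoSidedExp a b u = Real.exp (a * u) :=
  min_eq_left (Real.exp_le_exp.mpr (by nlinarith))

lemma twoSidedExp_of_nonneg (ha : 0 ≤ a) (hb : 0 ≤ b) {u : ℝ} (hu : 0 ≤ u) :
    twoSidedExp a b u = Real.exp (-b * u) := by
  rw [neg_mul]
  exact min_eq_right (Real.exp_le_exp.mpr (by nlinarith))

lemma integrableOn_twoSidedExp_Iic (ha : 0 < a) (hb : 0 < b) :
    IntegrableOn (twoSidedExp a b) (Iic 0) :=
  (integrableOn_exp_mul_Iic ha 0).congr_fun
    (fun _ hu ↦ (twoSidedExp_of_nonpos ha.le hb.le hu).symm) measurableSet_Iic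

lemma integrableOn_twoSidedExp_Ioi (ha : 0 < a) (hb : 0 < b) :
    IntegrableOn (twoSidedExp a b) (Ioi 0) :=
  (integrableOn_exp_mul_Ioi (neg_neg_of_pos hb) 0).congr_fun
    (fun _ hu ↦ (twoSidedExp_of_nonneg ha.le hb.le (le_of_lt hu)).symm) measurableSet_Ioi

lemma integrable_twoSidedExp (ha : 0 < a) (hb : 0 < b) : Integrable (twoSidedExp a b) := by
  rw [← integrableOn_univ, ← Iic_union_Ioi (a := (0 : ℝ))]
  exact (integrableOn_twoSidedExp_Iic ha hb).union (integrableOn_twoSidedExp_Ioi ha hb)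

lemma integral_twoSidedExp (ha : 0 < a) (hb : 0 < b) :
    ∫ u, twoSidedExp a b u = a⁻¹ + b⁻¹ := by
  rw [← intervalIntegral.integral_Iic_add_Ioi (integrableOn_twoSidedExp_Iic ha hb)
    (integrableOn_twoSidedExp_Ioi ha hb),
    setIntegral_congr_fun measurableSet_Iic (fun _ hu ↦ twoSidedExp_of_nonpos ha.le hb.le hu),
    setIntegral_congr_fun measurableSet_Ioi
      (fun _ hu ↦ twoSidedExp_of_nonneg ha.le hb.le (le_of_lt hu)),
    integral_exp_mul_Iic ha, integral_exp_mul_Ioi (neg_neg_of_pos hb)]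
  simp only [mul_zero, Real.exp_zero, one_div, div_neg, add_right_inj]
  ring

lemma tendsto_twoSidedExp_cocompact (ha : 0 < a) (hb : 0 < b) :
    Tendsto (twoSidedExp a b) (cocompact ℝ) (𝓝 0) := by
  rw [cocompact_eq_atBot_atTop, tendsto_sup]
  constructor
  · refine (Real.tendsto_exp_atBot.comp (tendsto_id.const_mul_atBot ha)).congr' ?_
    filter_upwards [eventually_le_atBot 0] with u hu
    exact (twoSidedExp_of_nonpos ha.le hb.le hu).symm
  · refine (Real.tendsto_exp_atBot.comp
      (tendsto_id.const_mul_atTop_of_neg (neg_neg_of_pos hb))).congr' ?_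
    filter_upwards [eventually_ge_atTop 0] with u hu
    exact (twoSidedExp_of_nonneg ha.le hb.le hu).symm

end twoSidedExp

lemma Complex.cos_mul_norm_le_re_s4 {z : ℂ} {ω : ℝ} (hω : ω ≤ π) (h : |arg z| ≤ ω) :
    Real.cos ω * ‖z‖ ≤ z.re := by
  rw [← norm_mul_cos_arg, mul_comm, ← Real.cos_abs (arg z)]
  exact mul_le_mul_of_nonneg_left (cos_le_cos_of_nonneg_of_le_pi (abs_nonneg _) hω h)
    (norm_nonneg z)

lemma Complex.max_norm_le_mul_norm_add {w z : ℂ} {c : ℝ} (hc : 0 < c) (hw : 0 ≤ w.re)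
    (hz : c * ‖z‖ ≤ z.re) : max ‖w‖ ‖z‖ ≤ (1 + c⁻¹) * ‖w + z‖ := by
  have hz' : ‖z‖ ≤ c⁻¹ * ‖w + z‖ := by
    rw [le_inv_mul_iff₀ hc]
    exact hz.trans ((le_add_of_nonneg_left hw).trans_eq (add_re w z).symm |>.trans (re_le_norm _))
  have hw' : ‖w‖ ≤ ‖w + z‖ + ‖z‖ := by
    simpa using norm_sub_le (w + z) z
  have hsum := norm_nonneg (w + z)
  exact max_le (by linarith) (by linarith)

lemma Complex.re_exp_nonneg {z : ℂ} (h : |z.im| ≤ π / 2) : 0 ≤ (exp z).re := by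
  rw [exp_re]
  exact mul_nonneg (Real.exp_pos _).le (Real.cos_nonneg_of_mem_Icc (abs_le.mp h))

lemma Real.exp_mul_rpow_div_max {L : ℝ} (hL : 0 < L) (β s x : ℝ) :
    Real.exp ((1 - β) * x) * L ^ s / max (Real.exp x) L =
      L ^ (s - β) * twoSidedExp (1 - β) β (x - log L) := by
  obtain ⟨ℓ, rfl⟩ : ∃ ℓ, Real.exp ℓ = L := ⟨log L, Real.exp_log hL⟩
  simp only [twoSidedExp, Real.log_exp, ← Real.exp_mul, mul_comm _ s, mul_comm _ (s - β)]
  rcases le_total x ℓ with h | h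
  · rw [max_eq_right (Real.exp_le_exp.mpr h), min_eq_left (Real.exp_le_exp.mpr (by nlinarith)),
      ← Real.exp_add, ← Real.exp_add, ← Real.exp_sub]
    ring_nf
  · rw [max_eq_left (Real.exp_le_exp.mpr h), min_eq_right (Real.exp_le_exp.mpr (by nlinarith)),
      ← Real.exp_add, ← Real.exp_add, ← Real.exp_sub]
    ring_nf

noncomputable def scalarIntegrand (β s : ℝ) (lam z : ℂ) : ℂ :=
  Complex.exp (((1 : ℂ) - β) * z) * lam ^ (s : ℂ) * (Complex.exp z + lam)⁻¹

lemma norm_scalarIntegrand_le {β s c : ℝ} {lam z : ℂ} (hc : 0 < c) (hlam : lam ≠ 0)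
    (hsector : c * ‖lam‖ ≤ lam.re) (hz : |z.im| ≤ π / 2) :
    ‖scalarIntegrand β s lam z‖ ≤
      (1 + c⁻¹) * ‖lam‖ ^ (s - β) * twoSidedExp (1 - β) β (z.re - Real.log ‖lam‖) := by
  have hexp : ‖Complex.exp (((1 : ℂ) - β) * z)‖ = Real.exp ((1 - β) * z.re) := by
    rw [Complex.norm_exp, ← ofReal_one, ← ofReal_sub, re_ofReal_mul]
  have hden : max (Real.exp z.re) ‖lam‖ ≤ (1 + c⁻¹) * ‖Complex.exp z + lam‖ := by
    simpa only [Complex.norm_exp] using max_norm_le_mul_norm_add hc (re_exp_nonneg hz) hsector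
  have hmax : 0 < max (Real.exp z.re) ‖lam‖ := lt_max_of_lt_left (Real.exp_pos _)
  calc ‖scalarIntegrand β s lam z‖
      = Real.exp ((1 - β) * z.re) * ‖lam‖ ^ s / ‖Complex.exp z + lam‖ := by
        rw [scalarIntegrand, norm_mul, norm_mul, norm_inv, hexp, norm_cpow_real, div_eq_mul_inv]
    _ ≤ Real.exp ((1 - β) * z.re) * ‖lam‖ ^ s / (max (Real.exp z.re) ‖lam‖ / (1 + c⁻¹)) := by
        gcongr
        rwa [div_le_iff₀' (by positivity)]
    _ = (1 + c⁻¹) * ‖lam‖ ^ (s - β) * twoSidedExp (1 - β) β (z.re - Real.log ‖lam‖) := by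
        rw [div_div_eq_mul_div, mul_div_right_comm, exp_mul_rpow_div_max (norm_pos_iff.mpr hlam)]
        ring

lemma integral_le_of_le_twoSidedExp {f : ℝ → ℝ} {a b M ℓ : ℝ} (ha : 0 < a) (hb : 0 < b)
    (hf0 : ∀ x, 0 ≤ f x) (hf : ∀ x, f x ≤ M * twoSidedExp a b (x - ℓ)) :
    ∫ x, f x ≤ M * (a⁻¹ + b⁻¹) := by
  calc ∫ x, f x ≤ ∫ x, M * twoSidedExp a b (x - ℓ) :=
        integral_mono_of_nonneg (ae_of_all _ hf0)
          (((integrable_twoSidedExp ha hb).comp_sub_right ℓ).const_mul M) (ae_of_all _ hf)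
    _ = M * (a⁻¹ + b⁻¹) := by
        rw [integral_const_mul, integral_sub_right_eq_self (twoSidedExp a b),
          integral_twoSidedExp ha hb]

section Band

variable {f : ℂ → ℂ} {a b M ℓ : ℝ}
  (hf : ∀ z : ℂ, |z.im| ≤ π / 2 → ‖f z‖ ≤ M * twoSidedExp a b (z.re - ℓ))
include hf

lemma integral_norm_vertical_le (t : ℝ) :
    ∫ y in (-(π / 2))..(π / 2), ‖f (t + y * I)‖ ≤ π * (M * twoSidedExp a b (t - ℓ)) := by
  have hline : ∀ y ∈ uIoc (-(π / 2)) (π / 2),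
      ‖‖f (t + y * I)‖‖ ≤ M * twoSidedExp a b (t - ℓ) := by
    intro y hy
    rw [uIoc_of_le (by linarith [pi_pos])] at hy
    simpa using hf (t + y * I) (by simpa using abs_le.mpr ⟨hy.1.le, hy.2⟩)
  calc _ ≤ _ := le_abs_self _
    _ ≤ _ := intervalIntegral.norm_integral_le_of_norm_le_const hline
    _ = _ := by rw [show π / 2 - -(π / 2) = π by ring, abs_of_pos pi_pos, mul_comm]

lemma integral_norm_horizontal_boundary_le (ha : 0 < a) (hb : 0 < b) :
    ∫ y : ℝ, (‖f (y - π / 2 * I)‖ + ‖f (y + π / 2 * I)‖) ≤ 2 * M * (a⁻¹ + b⁻¹) := by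
  refine integral_le_of_le_twoSidedExp (ℓ := ℓ) ha hb (fun _ ↦ by positivity) fun y ↦ ?_
  have hlower := hf (y - π / 2 * I) (by simp [abs_of_pos pi_div_two_pos])
  have hupper := hf (y + π / 2 * I) (by simp [abs_of_pos pi_div_two_pos])
  rw [show ((y : ℂ) - π / 2 * I).re = y by simp] at hlower
  rw [show ((y : ℂ) + π / 2 * I).re = y by simp] at hupper
  linarith

lemma tendsto_integral_norm_vertical (ha : 0 < a) (hb : 0 < b) :
    Tendsto (fun t : ℝ ↦ ∫ y in (-(π / 2))..(π / 2), ‖f (t + y * I)‖) (cocompact ℝ) (𝓝 0) := by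
  refine squeeze_zero (fun t ↦ intervalIntegral.integral_nonneg (by linarith [pi_pos])
    fun _ _ ↦ norm_nonneg _) (integral_norm_vertical_le hf) ?_
  simpa [mul_assoc] using ((tendsto_twoSidedExp_cocompact ha hb).comp
    (Homeomorph.subRight ℓ).map_cocompact.le).const_mul (π * M)

end Band

/-- Verification of the hypotheses of the sinc quadrature theorem for
`F_λ(z) = e^{(1-β)z} λ^s (e^z + λ)⁻¹`:
(a) uniformly bounded vertical line integrals, (b) integrable boundary values on the
two horizontal boundary lines of the band, (c) decay of the vertical line integrals. -/
theorem scalar_integrand_band_integrals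
    (β s ω c0 : ℝ) (hβ : β ∈ Set.Ioo 0 1) (hs : s ∈ Set.Ico 0 β)
    (hω0 : 0 ≤ ω) (hωlt : ω < π / 2) (hc0 : 0 < c0) :
    ∃ C : ℝ, 0 < C ∧
      ∀ lam : ℂ, lam ≠ 0 → |Complex.arg lam| ≤ ω → c0 ≤ lam.re →
        (∀ t : ℝ,
          (∫ y in (-(π / 2))..(π / 2),
            ‖Complex.exp (((1 : ℂ) - β) * (t + y * Complex.I)) * lam ^ (s : ℂ) *
              (Complex.exp ((t : ℂ) + y * Complex.I) + lam)⁻¹‖) ≤ π * C) ∧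
        ((∫ y : ℝ,
            (‖Complex.exp (((1 : ℂ) - β) * (y - (π / 2) * Complex.I)) * lam ^ (s : ℂ) *
                (Complex.exp ((y : ℂ) - (π / 2) * Complex.I) + lam)⁻¹‖ +
             ‖Complex.exp (((1 : ℂ) - β) * (y + (π / 2) * Complex.I)) * lam ^ (s : ℂ) *
                (Complex.exp ((y : ℂ) + (π / 2) * Complex.I) + lam)⁻¹‖))
          ≤ 2 * C * ((β - s)⁻¹ + (1 - β)⁻¹)) ∧
        Tendsto
          (fun t : ℝ => ∫ y in (-(π / 2))..(π / 2),
            ‖Complex.exp (((1 : ℂ) - β) * (t + y * Complex.I)) * lam ^ (s : ℂ) *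
              (Complex.exp ((t : ℂ) + y * Complex.I) + lam)⁻¹‖)
          (cocompact ℝ) (nhds 0) := by
  obtain ⟨hβ0, hβ1⟩ := hβ
  obtain ⟨hs0, hsβ⟩ := hs
  have hcos : 0 < Real.cos ω := Real.cos_pos_of_mem_Ioo ⟨by linarith [pi_pos], hωlt⟩
  refine ⟨(1 + (Real.cos ω)⁻¹) * c0 ^ (s - β), by positivity, fun lam hlam harg hre ↦ ?_⟩
  set M := (1 + (Real.cos ω)⁻¹) * ‖lam‖ ^ (s - β)
  have hbound (z : ℂ) (hz : |z.im| ≤ π / 2) :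
      ‖scalarIntegrand β s lam z‖ ≤ M * twoSidedExp (1 - β) β (z.re - Real.log ‖lam‖) :=
    norm_scalarIntegrand_le hcos hlam (cos_mul_norm_le_re_s4 (by linarith [pi_pos]) harg) hz
  have hM : M ≤ (1 + (Real.cos ω)⁻¹) * c0 ^ (s - β) :=
    mul_le_mul_of_nonneg_left
      (rpow_le_rpow_of_nonpos hc0 (hre.trans (re_le_norm lam)) (by linarith)) (by positivity)
  have hvertical := integral_norm_vertical_le hbound
  have hhorizontal := integral_norm_horizontal_boundary_le hbound (by linarith) hβ0
  have hdecay := tendsto_integral_norm_vertical hbound (by linarith) hβ0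
  refine ⟨fun t ↦ (hvertical t).trans ?_, hhorizontal.trans ?_, hdecay⟩
  · exact mul_le_mul_of_nonneg_left ((mul_le_of_le_one_right (by positivity)
      (twoSidedExp_le_one (by linarith) hβ0.le _)).trans hM) pi_pos.le
  · rw [add_comm (β - s)⁻¹]
    gcongr 2 * ?_ * (_ + ?_)
    exact inv_anti₀ (by linarith) (by linarith)
end

section
/- Let β ∈ (0,1) and let λ ∈ ℂ with Re λ > 0. Then the function μ ↦ μ^{-β} (μ + λ)^{-1} is Lebesgue integrable on (0, ∞) and λ^{-β} = (sin(πβ)/π) ∫_0^∞ μ^{-β} (μ + λ)^{-1} dμ, where λ^{-β} denotes the principal power exp(-β · Log λ). -/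
/-!
For real `λ = x > 0` the substitution `μ = x t` gives
`∫ μ^(-β) (μ + x)⁻¹ = x^(-β) ∫ t^(-β) (t + 1)⁻¹`, and `s = t / (1 + t)` turns the last integral
into `B(1 - β, β) = Γ(1 - β) Γ(β) = π / sin (π β)`. Both sides of
`∫ μ^(-β) (μ + λ)⁻¹ = λ^(-β) π / sin (π β)` are holomorphic on `Re λ > 0` (the left one by
dominated differentiation under the integral), so the identity theorem extends the equality from
the positive reals to the whole half-plane.
-/

open Real Complex MeasureTheory Set Filter Topology

namespace Balakrishnan

noncomputable def kernel (β : ℝ) (lam : ℂ) (μ : ℝ) : ℂ :=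
  (μ : ℂ) ^ (-β : ℂ) * ((μ : ℂ) + lam)⁻¹

lemma add_re_le_norm_ofReal_add (μ : ℝ) (lam : ℂ) : μ + lam.re ≤ ‖(μ : ℂ) + lam‖ := by
  simpa using re_le_norm ((μ : ℂ) + lam)

lemma norm_ofReal_cpow_ofReal {μ : ℝ} (hμ : 0 < μ) (r : ℝ) : ‖(μ : ℂ) ^ (r : ℂ)‖ = μ ^ r := by
  simp [norm_cpow_eq_rpow_re_of_pos hμ]

lemma integrableOn_rpow_neg_mul_add_inv {p c : ℝ} (hp0 : 0 < p) (hp1 : p < 1) (hc : 0 < c) :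
    IntegrableOn (fun μ : ℝ => μ ^ (-p) * (μ + c)⁻¹) (Ioi 0) := by
  have hmeas (s : Set ℝ) :
      AEStronglyMeasurable (fun μ : ℝ => μ ^ (-p) * (μ + c)⁻¹) (volume.restrict s) := by
    fun_prop
  have near_zero : IntegrableOn (fun μ : ℝ => μ ^ (-p) * (μ + c)⁻¹) (Ioc 0 1) := by
    refine Integrable.mono' (g := fun μ => μ ^ (-p) * c⁻¹) ?_ (hmeas _) ?_
    · exact ((intervalIntegrable_iff_integrableOn_Ioc_of_le zero_le_one).1
        (intervalIntegral.intervalIntegrable_rpow' (by linarith))).mul_const _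
    · filter_upwards [ae_restrict_mem measurableSet_Ioc] with μ ⟨hμ, _⟩
      rw [norm_of_nonneg (by positivity)]
      gcongr
      linarith
  have near_top : IntegrableOn (fun μ : ℝ => μ ^ (-p) * (μ + c)⁻¹) (Ioi 1) := by
    refine Integrable.mono' (integrableOn_Ioi_rpow_of_lt (by linarith : -p - 1 < -1) one_pos)
      (hmeas _) ?_
    filter_upwards [ae_restrict_mem measurableSet_Ioi] with μ (hμ : 1 < μ)
    rw [norm_of_nonneg (by positivity), rpow_sub (by positivity), rpow_one, div_eq_mul_inv]
    gcongr
    linarith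
  rw [← Ioc_union_Ioi_eq_Ioi zero_le_one]
  exact near_zero.union near_top

lemma integrableOn_kernel {β : ℝ} (hβ : β ∈ Ioo 0 1) {lam : ℂ} (hlam : 0 < lam.re) :
    IntegrableOn (kernel β lam) (Ioi 0) := by
  refine (integrableOn_rpow_neg_mul_add_inv hβ.1 hβ.2 hlam).mono' (by unfold kernel; fun_prop) ?_
  filter_upwards [ae_restrict_mem measurableSet_Ioi] with μ (hμ : 0 < μ)
  rw [kernel, norm_mul, norm_inv, ← ofReal_neg, norm_ofReal_cpow_ofReal hμ]
  gcongr
  exact add_re_le_norm_ofReal_add μ lam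

lemma betaIntegral_one_sub_self {s : ℂ} (hs0 : 0 < s.re) (hs1 : s.re < 1) :
    betaIntegral (1 - s) s = π / sin (π * s) := by
  have h := Gamma_mul_Gamma_eq_betaIntegral (s := 1 - s) (t := s) (by simpa) hs0
  rw [sub_add_cancel, Complex.Gamma_one, one_mul, mul_comm, Complex.Gamma_mul_Gamma_one_sub] at h
  exact h.symm

lemma image_div_one_add_Ioi : (fun t : ℝ => t / (1 + t)) '' Ioi 0 = Ioo 0 1 := by
  ext y
  constructor
  · rintro ⟨t, ht : 0 < t, rfl⟩
    exact ⟨by positivity, (div_lt_one (by positivity)).2 (by linarith)⟩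
  · rintro ⟨hy0, hy1⟩
    have hy : 0 < 1 - y := by linarith
    refine ⟨y / (1 - y), div_pos hy0 hy, ?_⟩
    field_simp [hy.ne']
    ring

lemma injOn_div_one_add_Ioi : InjOn (fun t : ℝ => t / (1 + t)) (Ioi 0) := by
  intro a (ha : 0 < a) b (hb : 0 < b) h
  rw [div_eq_div_iff (by positivity) (by positivity)] at h
  linarith

lemma hasDerivAt_div_one_add {t : ℝ} (ht : 1 + t ≠ 0) :
    HasDerivAt (fun t : ℝ => t / (1 + t)) ((1 + t) ^ 2)⁻¹ t := by
  have h : HasDerivAt (fun t : ℝ => t / (1 + t)) ((1 * (1 + t) - t * 1) / (1 + t) ^ 2) t :=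
    (hasDerivAt_id t).div ((hasDerivAt_id t).const_add 1) ht
  convert h using 1
  ring

lemma integral_kernel_one {β : ℝ} :
    ∫ t in Ioi 0, kernel β 1 t = betaIntegral (1 - β) β := by
  have hcov := integral_image_eq_integral_abs_deriv_smul measurableSet_Ioi
    (fun t (ht : 0 < t) => (hasDerivAt_div_one_add (by positivity)).hasDerivWithinAt)
    injOn_div_one_add_Ioi
    (fun x : ℝ => (x : ℂ) ^ ((1 - β : ℂ) - 1) * (1 - (x : ℂ)) ^ ((β : ℂ) - 1))
  rw [image_div_one_add_Ioi] at hcov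
  rw [betaIntegral, intervalIntegral.integral_of_le zero_le_one, integral_Ioc_eq_integral_Ioo,
    hcov]
  refine setIntegral_congr_fun measurableSet_Ioi fun t (ht : 0 < t) => ?_
  -- with `w = (1 + t)⁻¹` the substituted integrand is `w² (t w)^(-β) w^(β - 1) = t^(-β) w`
  set w : ℝ := (1 + t)⁻¹ with hw_def
  have hw : 0 < w := by positivity
  have hwC : (w : ℂ) ≠ 0 := by exact_mod_cast hw.ne'
  have h1 : ((t / (1 + t) : ℝ) : ℂ) = t * w := by push_cast [hw_def]; ring
  have h2 : (1 : ℂ) - ((t / (1 + t) : ℝ) : ℂ) = w := by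
    rw [← ofReal_one, ← ofReal_sub, hw_def]
    congr 1
    field_simp [(by positivity : 1 + t ≠ 0)]
    ring
  have h3 : |((1 + t) ^ 2)⁻¹| = w ^ 2 := by rw [abs_of_pos (by positivity), hw_def, inv_pow]
  have h4 : ((t : ℂ) + 1)⁻¹ = w := by push_cast [hw_def]; ring
  rw [kernel, h2, h1, h3, h4, mul_cpow_ofReal_nonneg ht.le hw.le, real_smul,
    show (1 - β : ℂ) - 1 = -β by ring, mul_assoc _ ((w : ℂ) ^ _), ← cpow_add _ _ hwC,
    show -(β : ℂ) + (β - 1) = -1 by ring, cpow_neg_one]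
  push_cast
  field_simp

lemma kernel_ofReal_mul (β : ℝ) (lam : ℂ) {x t : ℝ} (hx : 0 < x) (ht : 0 ≤ t) :
    kernel β (x * lam) (x * t) = (x : ℂ) ^ (-β : ℂ) * (x : ℂ)⁻¹ * kernel β lam t := by
  rw [kernel, kernel, ofReal_mul, mul_cpow_ofReal_nonneg hx.le ht, ← mul_add, mul_inv]
  ring

lemma integral_kernel_ofReal_mul (β : ℝ) (lam : ℂ) {x : ℝ} (hx : 0 < x) :
    ∫ μ in Ioi 0, kernel β (x * lam) μ = (x : ℂ) ^ (-β : ℂ) * ∫ t in Ioi 0, kernel β lam t := by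
  have h := integral_comp_mul_left_Ioi (kernel β (x * lam)) 0 hx
  rw [mul_zero, setIntegral_congr_fun measurableSet_Ioi
    fun t (ht : 0 < t) => kernel_ofReal_mul β lam hx ht.le, integral_const_mul] at h
  have hxC : (x : ℂ) ≠ 0 := ofReal_ne_zero.2 hx.ne'
  rw [real_smul, ofReal_inv] at h
  field_simp at h
  linear_combination -h

lemma hasDerivAt_kernel (β : ℝ) {lam : ℂ} {μ : ℝ} (h : (μ : ℂ) + lam ≠ 0) :
    HasDerivAt (fun z => kernel β z μ) (-((μ : ℂ) ^ (-β : ℂ) * (((μ : ℂ) + lam) ^ 2)⁻¹)) lam := by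
  have hd : HasDerivAt (fun z => kernel β z μ)
      ((μ : ℂ) ^ (-β : ℂ) * (-1 / ((μ : ℂ) + lam) ^ 2)) lam :=
    (((hasDerivAt_id lam).const_add (μ : ℂ)).inv h).const_mul _
  convert hd using 1
  ring

lemma norm_deriv_kernel_le {β ε μ : ℝ} {lam : ℂ} (hε : 0 < ε) (hμ : 0 < μ) (hlam : ε < lam.re) :
    ‖-((μ : ℂ) ^ (-β : ℂ) * (((μ : ℂ) + lam) ^ 2)⁻¹)‖ ≤ ε⁻¹ * (μ ^ (-β) * (μ + ε)⁻¹) := by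
  have hnorm : μ + ε ≤ ‖(μ : ℂ) + lam‖ := (add_re_le_norm_ofReal_add μ lam).trans' (by linarith)
  rw [norm_neg, norm_mul, norm_inv, norm_pow, ← ofReal_neg, norm_ofReal_cpow_ofReal hμ,
    mul_left_comm, ← mul_inv]
  gcongr
  calc ε * (μ + ε) ≤ (μ + ε) ^ 2 := by nlinarith
    _ ≤ ‖(μ : ℂ) + lam‖ ^ 2 := by gcongr

lemma differentiableAt_integral_kernel {β : ℝ} (hβ : β ∈ Ioo 0 1) {z : ℂ} (hz : 0 < z.re) :
    DifferentiableAt ℂ (fun lam => ∫ μ in Ioi 0, kernel β lam μ) z := by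
  set ε := z.re / 2
  have hε : 0 < ε := by positivity
  have hs : {lam : ℂ | ε < lam.re} ∈ 𝓝 z :=
    (isOpen_lt continuous_const continuous_re).mem_nhds (half_lt_self hz)
  refine (hasDerivAt_integral_of_dominated_loc_of_deriv_le hs
    (F' := fun lam μ => -((μ : ℂ) ^ (-β : ℂ) * (((μ : ℂ) + lam) ^ 2)⁻¹))
    (Eventually.of_forall fun lam => by unfold kernel; fun_prop) (integrableOn_kernel hβ hz)
    (by fun_prop) ?_ ((integrableOn_rpow_neg_mul_add_inv hβ.1 hβ.2 hε).const_mul ε⁻¹) ?_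
    ).2.differentiableAt
  · filter_upwards [ae_restrict_mem measurableSet_Ioi] with μ (hμ : 0 < μ) lam hlam
    exact norm_deriv_kernel_le hε hμ hlam
  · filter_upwards [ae_restrict_mem measurableSet_Ioi] with μ (hμ : 0 < μ) lam (hlam : ε < lam.re)
    refine hasDerivAt_kernel β fun h => ?_
    have := add_re_le_norm_ofReal_add μ lam
    rw [h, norm_zero] at this
    linarith

lemma integral_kernel_eq_cpow_mul {β : ℝ} (hβ : β ∈ Ioo 0 1) {lam : ℂ} (hlam : 0 < lam.re) :
    ∫ μ in Ioi 0, kernel β lam μ = lam ^ (-β : ℂ) * ∫ t in Ioi 0, kernel β 1 t := by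
  have hU : IsOpen {z : ℂ | 0 < z.re} := isOpen_lt continuous_const continuous_re
  have hF : AnalyticOnNhd ℂ (fun z => ∫ μ in Ioi 0, kernel β z μ) {z | 0 < z.re} :=
    DifferentiableOn.analyticOnNhd
      (fun z hz => (differentiableAt_integral_kernel hβ hz).differentiableWithinAt) hU
  have hG : AnalyticOnNhd ℂ (fun z => z ^ (-β : ℂ) * ∫ t in Ioi 0, kernel β 1 t) {z | 0 < z.re} :=
    DifferentiableOn.analyticOnNhd (fun z hz =>
      ((differentiableAt_id.cpow_const (Or.inl hz)).mul_const _).differentiableWithinAt) hU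
  -- by scaling the two sides agree on the positive reals, which accumulate at `1`
  have hreal : ∃ᶠ z in 𝓝[≠] (1 : ℂ),
      ∫ μ in Ioi 0, kernel β z μ = z ^ (-β : ℂ) * ∫ t in Ioi 0, kernel β 1 t := by
    have hto : Tendsto ofReal (𝓝[>] 1) (𝓝[≠] 1) :=
      tendsto_nhdsWithin_of_tendsto_nhds_of_eventually_within _
        (continuous_ofReal.tendsto' 1 1 ofReal_one |>.mono_left nhdsWithin_le_nhds)
        (eventually_nhdsWithin_of_forall fun x (hx : 1 < x) => by simpa using hx.ne')
    refine hto.frequently (Eventually.frequently ?_)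
    filter_upwards [self_mem_nhdsWithin] with x (hx : 1 < x)
    simpa using integral_kernel_ofReal_mul β 1 (one_pos.trans hx)
  exact hF.eqOn_of_preconnected_of_frequently_eq hG (convex_halfSpace_re_gt 0).isPreconnected
    (by simp) hreal hlam

end Balakrishnan

/-- Scalar Balakrishnan representation: for `β ∈ (0,1)` and `Re λ > 0`,
`μ ↦ μ^{-β} (μ + λ)⁻¹` is integrable on `(0,∞)` and
`λ^{-β} = (sin(πβ)/π) ∫_0^∞ μ^{-β} (μ + λ)⁻¹ dμ` (principal powers). -/
theorem scalar_balakrishnan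
    (β : ℝ) (hβ : β ∈ Set.Ioo 0 1) (lam : ℂ) (hlam : 0 < lam.re) :
    IntegrableOn (fun μ : ℝ => (μ : ℂ) ^ (-β : ℂ) * ((μ : ℂ) + lam)⁻¹) (Set.Ioi 0) ∧
    lam ^ (-β : ℂ) =
      ((Real.sin (π * β) / π : ℝ) : ℂ) *
        ∫ μ in Set.Ioi (0 : ℝ), (μ : ℂ) ^ (-β : ℂ) * ((μ : ℂ) + lam)⁻¹ := by
  refine ⟨Balakrishnan.integrableOn_kernel hβ hlam, ?_⟩
  have hsin : Real.sin (π * β) ≠ 0 :=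
    (Real.sin_pos_of_pos_of_lt_pi (by nlinarith [pi_pos, hβ.1]) (by nlinarith [pi_pos, hβ.2])).ne'
  have hβ' : 0 < (β : ℂ).re ∧ (β : ℂ).re < 1 := by simpa using hβ
  have hval : (π : ℂ) / Complex.sin (π * β) = ((π / Real.sin (π * β) : ℝ) : ℂ) := by push_cast; rfl
  change _ = _ * ∫ μ in Ioi 0, Balakrishnan.kernel β lam μ
  rw [Balakrishnan.integral_kernel_eq_cpow_mul hβ hlam, Balakrishnan.integral_kernel_one,
    Balakrishnan.betaIntegral_one_sub_self hβ'.1 hβ'.2, hval, mul_left_comm, ← ofReal_mul,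
    div_mul_div_cancel₀ pi_ne_zero, div_self hsin, ofReal_one, mul_one]
end

section
/- Let 𝒜 be a unital C*-algebra, c0 > 0, and let a ∈ 𝒜 be a selfadjoint element whose spectrum is contained in [c0, ∞). Let β ∈ (0,1). Then for every μ ≥ 0 the element μ·1 + a is invertible, the function μ ↦ μ^{-β} (μ·1 + a)^{-1} is Bochner integrable on (0, ∞) with respect to Lebesgue measure, and a^{-β} = (sin(πβ)/π) ∫_0^∞ μ^{-β} (μ·1 + a)^{-1} dμ. -/
/-!
For `t > 0` the substitution `u = μ / (μ + t)` maps `(0, ∞)` onto `(0, 1)` and turns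
`∫₀^∞ μ^{-β} (μ + t)⁻¹ dμ` into `t^{-β} B(1 - β, β) = t^{-β} Γ(β) Γ(1 - β) = t^{-β} π / sin (πβ)`.
Since `(μ·1 + a)⁻¹ = cfc (fun t ↦ (μ + t)⁻¹) a`, and on `σ(a) ⊆ [c0, ∞)` the integrand is dominated
by the integrable `μ^{-β} (μ + c0)⁻¹`, the continuous functional calculus commutes with the
integral, and the scalar identity applied on the spectrum gives the representation of `a^{-β}`.
-/

open Real MeasureTheory Set

theorem Real.sin_pi_mul_pos {β : ℝ} (hβ : β ∈ Ioo 0 1) : 0 < sin (π * β) :=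
  sin_pos_of_pos_of_lt_pi (mul_pos pi_pos hβ.1) (mul_lt_of_lt_one_right pi_pos hβ.2)

theorem Real.integral_Ioo_rpow_mul_one_sub_rpow {α β : ℝ} (hα : 0 < α) (hβ : 0 < β) :
    ∫ u in Ioo (0 : ℝ) 1, u ^ (α - 1) * (1 - u) ^ (β - 1) = Gamma α * Gamma β / Gamma (α + β) := by
  have hcpow : EqOn (fun x : ℝ ↦ (x : ℂ) ^ ((α : ℂ) - 1) * (1 - (x : ℂ)) ^ ((β : ℂ) - 1))
      (fun x ↦ ((x ^ (α - 1) * (1 - x) ^ (β - 1) : ℝ) : ℂ)) (uIcc 0 1) := by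
    intro x hx
    rw [uIcc_of_le zero_le_one] at hx
    push_cast
    rw [Complex.ofReal_cpow hx.1, Complex.ofReal_cpow (sub_nonneg.2 hx.2)]
    push_cast; rfl
  rw [← ProbabilityTheory.beta, ProbabilityTheory.beta_eq_betaIntegralReal α β hα hβ,
    Complex.betaIntegral, intervalIntegral.integral_congr hcpow, intervalIntegral.integral_ofReal,
    Complex.ofReal_re, intervalIntegral.integral_of_le zero_le_one, integral_Ioc_eq_integral_Ioo]

theorem image_div_add_Ioi {t : ℝ} (ht : 0 < t) : (fun x : ℝ ↦ x / (x + t)) '' Ioi 0 = Ioo 0 1 := by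
  ext u
  constructor
  · rintro ⟨x, hx : 0 < x, rfl⟩
    exact ⟨by positivity, (div_lt_one (by positivity)).2 (by linarith)⟩
  · rintro ⟨hu0, hu1⟩
    refine ⟨t * u / (1 - u), div_pos (mul_pos ht hu0) (sub_pos.2 hu1), ?_⟩
    have : 1 - u ≠ 0 := (sub_pos.2 hu1).ne'
    field_simp
    ring

theorem Real.integral_Ioi_rpow_neg_mul_add_inv {β t : ℝ} (hβ : β ∈ Ioo 0 1) (ht : 0 < t) :
    ∫ μ in Ioi 0, μ ^ (-β) * (μ + t)⁻¹ = π / sin (π * β) * t ^ (-β) := by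
  have hderiv (x : ℝ) (hx : x ∈ Ioi 0) :
      HasDerivWithinAt (fun x : ℝ ↦ x / (x + t)) (t / (x + t) ^ 2) (Ioi 0) x := by
    have hxt : x + t ≠ 0 := (add_pos hx ht).ne'
    exact ((hasDerivAt_id x).div ((hasDerivAt_id x).add_const t) hxt).hasDerivWithinAt.congr_deriv
      (by simp)
  have hinj : InjOn (fun x : ℝ ↦ x / (x + t)) (Ioi 0) := by
    intro x (hx : 0 < x) y (hy : 0 < y) h
    have : x + t ≠ 0 := by positivity
    have : y + t ≠ 0 := by positivity
    field_simp at h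
    nlinarith
  have hsubst := integral_image_eq_integral_abs_deriv_smul measurableSet_Ioi hderiv hinj
    (fun u ↦ u ^ (-β) * (1 - u) ^ (β - 1))
  have hbeta := integral_Ioo_rpow_mul_one_sub_rpow (sub_pos.2 hβ.2) hβ.1
  rw [sub_sub_cancel_left, sub_add_cancel, Gamma_one, div_one, mul_comm,
    Gamma_mul_Gamma_one_sub] at hbeta
  rw [image_div_add_Ioi ht, hbeta] at hsubst
  have hintegrand : EqOn
      (fun x ↦ |t / (x + t) ^ 2| • ((x / (x + t)) ^ (-β) * (1 - x / (x + t)) ^ (β - 1)))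
      (fun x ↦ t ^ β * (x ^ (-β) * (x + t)⁻¹)) (Ioi 0) := by
    intro x (hx : 0 < x)
    have hxt : 0 < x + t := by positivity
    have h1 : 1 - x / (x + t) = t / (x + t) := by field_simp; ring
    simp only [smul_eq_mul]
    rw [h1, abs_of_pos (by positivity), div_rpow hx.le hxt.le, div_rpow ht.le hxt.le,
      rpow_neg hx.le, rpow_neg hxt.le, rpow_sub_one ht.ne', rpow_sub_one hxt.ne']
    have : x ^ β ≠ 0 := by positivity
    have : (x + t) ^ β ≠ 0 := by positivity
    field_simp
  rw [setIntegral_congr_fun measurableSet_Ioi hintegrand, integral_const_mul] at hsubst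
  rw [hsubst, rpow_neg ht.le]
  field_simp

theorem Real.integrableOn_rpow_neg_mul_add_inv {β t : ℝ} (hβ : β ∈ Ioo 0 1) (ht : 0 < t) :
    IntegrableOn (fun μ : ℝ ↦ μ ^ (-β) * (μ + t)⁻¹) (Ioi 0) := by
  -- `integral_Ioi_rpow_neg_mul_add_inv` needs no integrability hypothesis, and its value is nonzero
  refine .of_integral_ne_zero ?_
  rw [integral_Ioi_rpow_neg_mul_add_inv hβ ht]
  have := sin_pi_mul_pos hβ
  positivity

theorem Real.continuousOn_rpow_neg_mul_add_inv (β : ℝ) :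
    ContinuousOn (fun x : ℝ × ℝ ↦ x.1 ^ (-β) * (x.1 + x.2)⁻¹) (Ioi 0 ×ˢ Ici 0) :=
  (continuousOn_fst.rpow_const fun _ hx ↦ Or.inl hx.1.ne').mul
    ((continuousOn_fst.add continuousOn_snd).inv₀ fun _ hx ↦
      (add_pos_of_pos_of_nonneg hx.1 hx.2).ne')

theorem Real.norm_rpow_neg_mul_add_inv_le {β c μ t : ℝ} (hc : 0 < c) (hμ : 0 < μ) (ht : c ≤ t) :
    ‖μ ^ (-β) * (μ + t)⁻¹‖ ≤ μ ^ (-β) * (μ + c)⁻¹ := by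
  have ht₀ : 0 < t := hc.trans_le ht
  rw [norm_of_nonneg (by positivity)]
  exact mul_le_mul_of_nonneg_left (inv_anti₀ (by positivity) (by linarith)) (by positivity)

section

variable {A : Type*} {p : A → Prop} [Ring A] [StarRing A] [TopologicalSpace A] [Algebra ℝ A]
  [ContinuousFunctionalCalculus ℝ A p] {a : A} {μ : ℝ}

theorem cfc_const_add_id (μ : ℝ) (a : A) (ha : p a := by cfc_tac) :
    cfc (μ + ·) a = algebraMap ℝ A μ + a := by
  rw [cfc_const_add μ (fun t ↦ t) a, cfc_id' ℝ a]

theorem isUnit_algebraMap_add (hμ : ∀ t ∈ spectrum ℝ a, μ + t ≠ 0) (ha : p a := by cfc_tac) :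
    IsUnit (algebraMap ℝ A μ + a) :=
  cfc_const_add_id μ a ▸ (isUnit_cfc_iff (μ + ·) a).2 hμ

theorem cfc_add_inv (hμ : ∀ t ∈ spectrum ℝ a, μ + t ≠ 0) (ha : p a := by cfc_tac) :
    cfc (fun t ↦ (μ + t)⁻¹) a = Ring.inverse (algebraMap ℝ A μ + a) := by
  rw [cfc_inv (μ + ·) a hμ, cfc_const_add_id μ a]

theorem rpow_neg_smul_ringInverse_eq_cfc {β : ℝ} (hspec : ∀ t ∈ spectrum ℝ a, 0 < t) (hμ : 0 ≤ μ)
    (ha : p a := by cfc_tac) :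
    μ ^ (-β) • Ring.inverse (algebraMap ℝ A μ + a) = cfc (fun t ↦ μ ^ (-β) * (μ + t)⁻¹) a := by
  have hne : ∀ t ∈ spectrum ℝ a, μ + t ≠ 0 := fun t ht ↦ by have := hspec t ht; positivity
  have hcont : ContinuousOn (fun t ↦ (μ + t)⁻¹) (spectrum ℝ a) :=
    (continuousOn_const.add continuousOn_id).inv₀ hne
  rw [cfc_const_mul (μ ^ (-β)) _ a hcont, cfc_add_inv hne]

end

section

variable {A : Type*} {p : A → Prop} [NormedRing A] [StarRing A] [NormedAlgebra ℝ A]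
  [CompleteSpace A] [ContinuousFunctionalCalculus ℝ A p] {a : A} {β c : ℝ}

theorem integrableOn_rpow_neg_smul_ringInverse (hc : 0 < c) (hspec : spectrum ℝ a ⊆ Ici c)
    (hβ : β ∈ Ioo 0 1) (ha : p a := by cfc_tac) :
    IntegrableOn (fun μ ↦ μ ^ (-β) • Ring.inverse (algebraMap ℝ A μ + a)) (Ioi 0) := by
  have hpos : ∀ t ∈ spectrum ℝ a, 0 < t := fun t ht ↦ hc.trans_le (hspec ht)
  refine (integrableOn_cfc measurableSet_Ioi (fun μ t ↦ μ ^ (-β) * (μ + t)⁻¹)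
    (fun μ ↦ μ ^ (-β) * (μ + c)⁻¹) a ?_ ?_
    (integrableOn_rpow_neg_mul_add_inv hβ hc).hasFiniteIntegral ha).congr_fun
    (fun μ hμ ↦ (rpow_neg_smul_ringInverse_eq_cfc hpos (le_of_lt hμ)).symm) measurableSet_Ioi
  · exact (continuousOn_rpow_neg_mul_add_inv β).mono
      (prod_mono subset_rfl fun t ht ↦ (hpos t ht).le)
  · exact ae_restrict_of_forall_mem measurableSet_Ioi fun μ hμ t ht ↦
      norm_rpow_neg_mul_add_inv_le hc hμ (hspec ht)

theorem cfc_rpow_neg_eq_integral (hc : 0 < c) (hspec : spectrum ℝ a ⊆ Ici c)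
    (hβ : β ∈ Ioo 0 1) (ha : p a := by cfc_tac) :
    cfc (fun t : ℝ ↦ t ^ (-β)) a =
      (sin (π * β) / π) • ∫ μ in Ioi 0, μ ^ (-β) • Ring.inverse (algebraMap ℝ A μ + a) := by
  have hpos : ∀ t ∈ spectrum ℝ a, 0 < t := fun t ht ↦ hc.trans_le (hspec ht)
  have hsin := (sin_pi_mul_pos hβ).ne'
  have hint : ∀ t ∈ spectrum ℝ a,
      ∫ μ in Ioi 0, μ ^ (-β) * (μ + t)⁻¹ = π / sin (π * β) * t ^ (-β) :=
    fun t ht ↦ integral_Ioi_rpow_neg_mul_add_inv hβ (hpos t ht)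
  have hint_cont : ContinuousOn (fun t ↦ ∫ μ in Ioi 0, μ ^ (-β) * (μ + t)⁻¹) (spectrum ℝ a) :=
    (continuousOn_const.mul (continuousOn_id.rpow_const fun t ht ↦ Or.inl (hpos t ht).ne')).congr
      fun t ht ↦ hint t ht
  calc cfc (fun t : ℝ ↦ t ^ (-β)) a
      = cfc (fun t ↦ sin (π * β) / π * ∫ μ in Ioi 0, μ ^ (-β) * (μ + t)⁻¹) a := by
        refine cfc_congr fun t ht ↦ ?_
        rw [hint t ht, ← mul_assoc, div_mul_div_cancel₀ pi_ne_zero, div_self hsin, one_mul]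
    _ = (sin (π * β) / π) • cfc (fun t ↦ ∫ μ in Ioi 0, μ ^ (-β) * (μ + t)⁻¹) a :=
        cfc_const_mul _ _ a hint_cont
    _ = (sin (π * β) / π) • ∫ μ in Ioi (0 : ℝ), cfc (fun t ↦ μ ^ (-β) * (μ + t)⁻¹) a := by
        rw [cfc_setIntegral measurableSet_Ioi _ (fun μ ↦ μ ^ (-β) * (μ + c)⁻¹) a
          ((continuousOn_rpow_neg_mul_add_inv β).mono
            (prod_mono subset_rfl fun t ht ↦ (hpos t ht).le))
          (ae_restrict_of_forall_mem measurableSet_Ioi fun μ hμ t ht ↦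
            norm_rpow_neg_mul_add_inv_le hc hμ (hspec ht))
          (integrableOn_rpow_neg_mul_add_inv hβ hc).hasFiniteIntegral ha]
    _ = _ := by
        rw [setIntegral_congr_fun measurableSet_Ioi
          fun μ hμ ↦ (rpow_neg_smul_ringInverse_eq_cfc hpos (le_of_lt hμ)).symm]

end

/-- Balakrishnan representation in a unital C*-algebra: if `a` is selfadjoint with
spectrum in `[c0, ∞)`, `c0 > 0`, and `β ∈ (0,1)`, then every `μ·1 + a` (`μ ≥ 0`) is
invertible, `μ ↦ μ^{-β} (μ·1 + a)⁻¹` is Bochner integrable on `(0,∞)`, and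
`a^{-β} = (sin(πβ)/π) ∫_0^∞ μ^{-β} (μ·1 + a)⁻¹ dμ`, where fractional powers of `a`
are given by the continuous functional calculus. -/
theorem cstar_balakrishnan
    (𝒜 : Type*) [CStarAlgebra 𝒜] (c0 : ℝ) (hc0 : 0 < c0)
    (a : 𝒜) (ha : IsSelfAdjoint a) (hspec : spectrum ℝ a ⊆ Set.Ici c0)
    (β : ℝ) (hβ : β ∈ Set.Ioo 0 1) :
    (∀ μ : ℝ, 0 ≤ μ → IsUnit (algebraMap ℝ 𝒜 μ + a)) ∧
    IntegrableOn (fun μ : ℝ => μ ^ (-β) • Ring.inverse (algebraMap ℝ 𝒜 μ + a))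
      (Set.Ioi 0) ∧
    cfc (fun t : ℝ => t ^ (-β)) a =
      (Real.sin (π * β) / π) •
        ∫ μ in Set.Ioi (0 : ℝ), μ ^ (-β) • Ring.inverse (algebraMap ℝ 𝒜 μ + a) := by
  refine ⟨fun μ hμ ↦ isUnit_algebraMap_add (fun t ht ↦ ?_) ha,
    integrableOn_rpow_neg_smul_ringInverse hc0 hspec hβ ha,
    cfc_rpow_neg_eq_integral hc0 hspec hβ ha⟩
  exact (add_pos_of_nonneg_of_pos hμ (hc0.trans_le (hspec ht))).ne'
end

section
/- Let 𝒜 be a unital C*-algebra, c0 > 0, and let a ∈ 𝒜 be a selfadjoint element whose spectrum is contained in [c0, ∞). Let β ∈ (0,1). Then for every y ∈ ℝ the element e^y·1 + a is invertible, the function y ↦ e^{(1-β)y} (e^y·1 + a)^{-1} is Bochner integrable on ℝ, and a^{-β} = (sin(πβ)/π) ∫_{-∞}^{∞} e^{(1-β)y} (e^y·1 + a)^{-1} dy. -/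
/-!
Everything reduces to the scalar identity `∫ e^{(1-β)y} (e^y + t)⁻¹ dy = (π / sin πβ) t^{-β}`
for `t > 0`, which is pushed through the continuous functional calculus of `a`: the resolvent
`(e^y + a)⁻¹` is `cfc (fun t => (e^y + t)⁻¹) a`, and since the spectrum lies in `[c0, ∞)` the
integrand is dominated by its value at `t = c0`, so integral and calculus commute. The scalar
identity follows by translating `y` by `log t` to the case `t = 1`, where the substitution
`y = log (u / (1 - u))` gives the Beta integral `B(1 - β, β) = Γ(1 - β) Γ(β) = π / sin πβ`.
-/

open Real MeasureTheory Set

theorem ofReal_rpow_mul_one_sub_rpow (p q : ℝ) {u : ℝ} (hu : u ∈ Icc (0 : ℝ) 1) :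
    ((u ^ (p - 1) * (1 - u) ^ (q - 1) : ℝ) : ℂ) =
      (u : ℂ) ^ ((p : ℂ) - 1) * (1 - (u : ℂ)) ^ ((q : ℂ) - 1) := by
  rw [Complex.ofReal_mul, Complex.ofReal_cpow hu.1, Complex.ofReal_cpow (sub_nonneg.2 hu.2)]
  push_cast
  rfl

theorem integrableOn_rpow_mul_one_sub_rpow {p q : ℝ} (hp : 0 < p) (hq : 0 < q) :
    IntegrableOn (fun u : ℝ => u ^ (p - 1) * (1 - u) ^ (q - 1)) (Ioo 0 1) := by
  have h := Complex.betaIntegral_convergent (u := p) (v := q) (by simpa) (by simpa)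
  rw [intervalIntegrable_iff_integrableOn_Ioc_of_le zero_le_one] at h
  refine IntegrableOn.congr_fun (h.mono_set Ioo_subset_Ioc_self).re (fun u hu => ?_)
    measurableSet_Ioo
  rw [← ofReal_rpow_mul_one_sub_rpow p q (Ioo_subset_Icc_self hu), RCLike.re_to_complex,
    Complex.ofReal_re]

theorem integral_rpow_mul_one_sub_rpow {p q : ℝ} (hp : 0 < p) (hq : 0 < q) :
    ∫ u in Ioo (0 : ℝ) 1, u ^ (p - 1) * (1 - u) ^ (q - 1) = Gamma p * Gamma q / Gamma (p + q) := by
  apply Complex.ofReal_injective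
  rw [← integral_complex_ofReal, ← integral_Ioc_eq_integral_Ioo,
    setIntegral_congr_fun measurableSet_Ioc
      (fun u hu => ofReal_rpow_mul_one_sub_rpow p q (Ioc_subset_Icc_self hu)),
    ← intervalIntegral.integral_of_le zero_le_one, ← Complex.betaIntegral,
    Complex.betaIntegral_eq_Gamma_mul_div _ _ (by simpa) (by simpa), ← Complex.ofReal_add]
  simp only [Complex.Gamma_ofReal]
  norm_cast

noncomputable def logit (u : ℝ) : ℝ := log u - log (1 - u)

theorem hasDerivAt_logit {u : ℝ} (hu : u ∈ Ioo (0 : ℝ) 1) :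
    HasDerivAt logit (u * (1 - u))⁻¹ u := by
  have hu0 : u ≠ 0 := hu.1.ne'
  have h1u : 1 - u ≠ 0 := (sub_pos.2 hu.2).ne'
  refine ((hasDerivAt_log hu0).sub (((hasDerivAt_id u).const_sub 1).log h1u)).congr_deriv ?_
  simp only [id]
  field_simp
  ring

theorem strictMonoOn_logit : StrictMonoOn logit (Ioo 0 1) := fun u hu v hv huv => by
  have h1 : log u < log v := log_lt_log hu.1 huv
  have h2 : log (1 - v) < log (1 - u) := log_lt_log (sub_pos.2 hv.2) (by linarith)
  simp only [logit]
  linarith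

theorem exp_logit {u : ℝ} (hu : u ∈ Ioo (0 : ℝ) 1) : exp (logit u) = u / (1 - u) := by
  rw [logit, exp_sub, exp_log hu.1, exp_log (sub_pos.2 hu.2)]

theorem logit_image_Ioo : logit '' Ioo 0 1 = univ := by
  refine eq_univ_of_forall fun z => ⟨exp z / (1 + exp z), ⟨by positivity, ?_⟩, ?_⟩
  · rw [div_lt_one (by positivity)]
    linarith
  · have h : 1 - exp z / (1 + exp z) = 1 / (1 + exp z) := by field_simp; ring
    rw [logit, h, log_div (exp_pos z).ne' (by positivity), log_div one_ne_zero (by positivity),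
      log_one, log_exp]
    ring

section LogitSubstitution

variable {E : Type*} [NormedAddCommGroup E] [NormedSpace ℝ E]

theorem integrable_iff_integrableOn_comp_logit {g : ℝ → E} :
    Integrable g ↔ IntegrableOn (fun u => (u * (1 - u))⁻¹ • g (logit u)) (Ioo 0 1) := by
  rw [← integrableOn_univ, ← logit_image_Ioo, integrableOn_image_iff_integrableOn_abs_deriv_smul
    measurableSet_Ioo (fun u hu => (hasDerivAt_logit hu).hasDerivWithinAt)
    strictMonoOn_logit.injOn]
  refine integrableOn_congr_fun (fun u hu => ?_) measurableSet_Ioo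
  rw [abs_of_pos (inv_pos.2 (mul_pos hu.1 (sub_pos.2 hu.2)))]

theorem integral_eq_setIntegral_comp_logit (g : ℝ → E) :
    ∫ z, g z = ∫ u in Ioo 0 1, (u * (1 - u))⁻¹ • g (logit u) := by
  rw [← setIntegral_univ, ← logit_image_Ioo, integral_image_eq_integral_abs_deriv_smul
    measurableSet_Ioo (fun u hu => (hasDerivAt_logit hu).hasDerivWithinAt)
    strictMonoOn_logit.injOn]
  refine setIntegral_congr_fun measurableSet_Ioo (fun u hu => ?_)
  rw [abs_of_pos (inv_pos.2 (mul_pos hu.1 (sub_pos.2 hu.2)))]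

end LogitSubstitution

noncomputable def balakrishnanKernel (β y t : ℝ) : ℝ := exp ((1 - β) * y) * (exp y + t)⁻¹

section Kernel

variable {β : ℝ}

theorem inv_smul_balakrishnanKernel_logit {u : ℝ} (hu : u ∈ Ioo (0 : ℝ) 1) :
    (u * (1 - u))⁻¹ • balakrishnanKernel β (logit u) 1 = u ^ (1 - β - 1) * (1 - u) ^ (β - 1) := by
  have hu0 : u ≠ 0 := hu.1.ne'
  have h1u : 0 < 1 - u := sub_pos.2 hu.2
  have hsum : exp (logit u) + 1 = (1 - u)⁻¹ := by
    rw [exp_logit hu]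
    field_simp
    ring
  have hexp : exp ((1 - β) * logit u) = u ^ (1 - β - 1) * (1 - u) ^ (β - 1) * u := by
    rw [rpow_def_of_pos hu.1, rpow_def_of_pos h1u, ← exp_log hu.1, ← exp_add, ← exp_add,
      exp_log hu.1, logit]
    ring_nf
  rw [balakrishnanKernel, hsum, inv_inv, hexp, smul_eq_mul]
  field_simp

theorem integrable_balakrishnanKernel_one (hβ : β ∈ Ioo 0 1) :
    Integrable (fun y => balakrishnanKernel β y 1) := by
  rw [integrable_iff_integrableOn_comp_logit]
  exact (integrableOn_rpow_mul_one_sub_rpow (sub_pos.2 hβ.2) hβ.1).congr_fun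
    (fun u hu => (inv_smul_balakrishnanKernel_logit hu).symm) measurableSet_Ioo

theorem integral_balakrishnanKernel_one (hβ : β ∈ Ioo 0 1) :
    ∫ y, balakrishnanKernel β y 1 = π / sin (π * β) := by
  rw [integral_eq_setIntegral_comp_logit,
    setIntegral_congr_fun measurableSet_Ioo (fun u hu => inv_smul_balakrishnanKernel_logit hu),
    integral_rpow_mul_one_sub_rpow (sub_pos.2 hβ.2) hβ.1, sub_add_cancel, Gamma_one, div_one,
    mul_comm, Gamma_mul_Gamma_one_sub]

theorem balakrishnanKernel_eq_rpow_mul {t : ℝ} (ht : 0 < t) (y : ℝ) :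
    balakrishnanKernel β y t = t ^ (-β) * balakrishnanKernel β (y - log t) 1 := by
  have hexp : t ^ (-β) * exp ((1 - β) * (y - log t)) = exp ((1 - β) * y) * t⁻¹ := by
    rw [rpow_def_of_pos ht, ← exp_add, ← exp_log (inv_pos.2 ht), ← exp_add, log_inv]
    ring_nf
  rw [balakrishnanKernel, balakrishnanKernel, ← mul_assoc, hexp, exp_sub, exp_log ht]
  field_simp

theorem integrable_balakrishnanKernel (hβ : β ∈ Ioo 0 1) {t : ℝ} (ht : 0 < t) :
    Integrable (fun y => balakrishnanKernel β y t) := by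
  simp_rw [balakrishnanKernel_eq_rpow_mul ht]
  exact ((integrable_balakrishnanKernel_one hβ).comp_sub_right (log t)).const_mul _

theorem integral_balakrishnanKernel (hβ : β ∈ Ioo 0 1) {t : ℝ} (ht : 0 < t) :
    ∫ y, balakrishnanKernel β y t = π / sin (π * β) * t ^ (-β) := by
  simp_rw [balakrishnanKernel_eq_rpow_mul ht]
  rw [integral_const_mul, integral_sub_right_eq_self (fun y => balakrishnanKernel β y 1),
    integral_balakrishnanKernel_one hβ, mul_comm]

theorem norm_balakrishnanKernel_le {y s t : ℝ} (hs : 0 < s) (hst : s ≤ t) :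
    ‖balakrishnanKernel β y t‖ ≤ balakrishnanKernel β y s := by
  have ht : 0 < exp y + t := add_pos (exp_pos y) (hs.trans_le hst)
  rw [balakrishnanKernel, Real.norm_of_nonneg (mul_nonneg (exp_pos _).le (inv_pos.2 ht).le)]
  unfold balakrishnanKernel
  gcongr

theorem continuousOn_balakrishnanKernel :
    ContinuousOn (Function.uncurry (balakrishnanKernel β)) (univ ×ˢ Ici 0) := by
  refine ContinuousOn.mul (by fun_prop) (ContinuousOn.inv₀ (by fun_prop) fun p hp => ?_)
  exact (add_pos_of_pos_of_nonneg (exp_pos _) hp.2).ne'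

end Kernel

theorem isUnit_algebraMap_add_s12 {R A : Type*} [CommRing R] [Ring A] [Algebra R A] {r : R} {a : A}
    (h : -r ∉ spectrum R a) : IsUnit (algebraMap R A r + a) := by
  simpa [neg_sub', add_comm] using (spectrum.notMem_iff.1 h).neg

section Resolvent

variable {R A : Type*} {p : A → Prop} [Field R] [StarRing R] [MetricSpace R]
  [IsTopologicalRing R] [ContinuousStar R] [ContinuousInv₀ R] [TopologicalSpace A] [Ring A]
  [StarRing A] [Algebra R A] [ContinuousFunctionalCalculus R A p]

theorem ring_inverse_algebraMap_add_eq_cfc {r : R} {a : A} (h : ∀ x ∈ spectrum R a, r + x ≠ 0)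
    (ha : p a := by cfc_tac) :
    Ring.inverse (algebraMap R A r + a) = cfc (fun x => (r + x)⁻¹) a := by
  rw [cfc_inv (fun x => r + x) a h, cfc_const_add r (fun x => x) a, cfc_id' R a]

end Resolvent

/-- Balakrishnan representation after the substitution `μ = e^y`, in a unital
C*-algebra: if `a` is selfadjoint with spectrum in `[c0, ∞)`, `c0 > 0`, and
`β ∈ (0,1)`, then every `e^y·1 + a` is invertible, `y ↦ e^{(1-β)y} (e^y·1 + a)⁻¹` is
Bochner integrable on `ℝ`, and `a^{-β} = (sin(πβ)/π) ∫_{-∞}^{∞} e^{(1-β)y} (e^y·1 + a)⁻¹ dy`,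
where fractional powers of `a` are given by the continuous functional calculus. -/
theorem cstar_balakrishnan_exp
    (𝒜 : Type*) [CStarAlgebra 𝒜] (c0 : ℝ) (hc0 : 0 < c0)
    (a : 𝒜) (ha : IsSelfAdjoint a) (hspec : spectrum ℝ a ⊆ Set.Ici c0)
    (β : ℝ) (hβ : β ∈ Set.Ioo 0 1) :
    (∀ y : ℝ, IsUnit (algebraMap ℝ 𝒜 (Real.exp y) + a)) ∧
    Integrable (fun y : ℝ =>
      Real.exp ((1 - β) * y) • Ring.inverse (algebraMap ℝ 𝒜 (Real.exp y) + a)) ∧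
    cfc (fun t : ℝ => t ^ (-β)) a =
      (Real.sin (π * β) / π) •
        ∫ y : ℝ, Real.exp ((1 - β) * y) • Ring.inverse (algebraMap ℝ 𝒜 (Real.exp y) + a) := by
  have hpos : ∀ x ∈ spectrum ℝ a, 0 < x := fun x hx => hc0.trans_le (hspec hx)
  have hne (y : ℝ) : ∀ x ∈ spectrum ℝ a, exp y + x ≠ 0 := fun x hx =>
    (add_pos (exp_pos y) (hpos x hx)).ne'
  have hintegrand (y : ℝ) : exp ((1 - β) * y) • Ring.inverse (algebraMap ℝ 𝒜 (exp y) + a) =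
      cfc (balakrishnanKernel β y) a := by
    have hres : ContinuousOn (fun x => (exp y + x)⁻¹) (spectrum ℝ a) :=
      (continuousOn_const.add continuousOn_id).inv₀ (hne y)
    rw [ring_inverse_algebraMap_add_eq_cfc (hne y), ← cfc_const_mul _ _ a hres]
    rfl
  have hcont : ContinuousOn (Function.uncurry (balakrishnanKernel β)) (univ ×ˢ spectrum ℝ a) :=
    continuousOn_balakrishnanKernel.mono (prod_mono subset_rfl fun x hx => (hpos x hx).le)
  have hbound :
      ∀ᵐ y, ∀ x ∈ spectrum ℝ a, ‖balakrishnanKernel β y x‖ ≤ balakrishnanKernel β y c0 :=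
    ae_of_all _ fun y x hx => norm_balakrishnanKernel_le hc0 (hspec hx)
  have hbound_int := (integrable_balakrishnanKernel hβ hc0).hasFiniteIntegral
  simp_rw [hintegrand]
  refine ⟨fun y => isUnit_algebraMap_add_s12 fun hy => ?_,
    integrable_cfc _ _ a hcont hbound hbound_int, ?_⟩
  · linarith [exp_pos y, hpos _ hy]
  have hrpow : ContinuousOn (fun x : ℝ => x ^ (-β)) (spectrum ℝ a) :=
    continuousOn_id.rpow_const fun x hx => Or.inl (hpos x hx).ne'
  have hsin : sin (π * β) ≠ 0 :=
    (sin_pos_of_pos_of_lt_pi (mul_pos pi_pos hβ.1) (mul_lt_of_lt_one_right pi_pos hβ.2)).ne'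
  rw [← cfc_integral _ _ a hcont hbound hbound_int,
    cfc_congr fun x hx => integral_balakrishnanKernel hβ (hpos x hx), cfc_const_mul _ _ a hrpow,
    smul_smul, div_mul_div_cancel₀ pi_ne_zero, div_self hsin, one_smul]
end

section
/- Let X be a complex Hilbert space, Y a complex normed space, and j : Y → X a linear map with ‖j v‖_X ≤ ‖v‖_Y for all v ∈ Y. Let B : Y × Y → ℂ be a sesquilinear form and ω ∈ [0, π/2), and assume the numerical range condition: Re B(v, v) ≥ 0 and |Im B(v, v)| ≤ tan(ω) · Re B(v, v) for all v ∈ Y. Let z ∈ ℂ with Re z < 0, f ∈ X and u ∈ Y satisfy B(u, φ) − z ⟨j u, j φ⟩_X = ⟨f, j φ⟩_X for all φ ∈ Y. Then |z| · ‖j u‖_X ≤ (cos ω)^{-1} ‖f‖_X. -/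
/-!
Testing the weak equation with `φ = u` gives `B(u,u) - z ‖j u‖² = ⟨j u, f⟩`. The point
`λ = z ‖j u‖²` lies in the closed left half-plane and `B(u,u)` in the sector `S_ω`, and the
distance between two such points is at least `cos ω · |λ|`. Hence
`cos ω · |z| ‖j u‖² ≤ |⟨j u, f⟩| ≤ ‖j u‖ ‖f‖`, and dividing by `‖j u‖` gives the bound.
-/

section Sector

open Real

def sector (ω : ℝ) : Set ℂ := {w | 0 ≤ w.re ∧ |w.im| ≤ tan ω * w.re}

variable {ω : ℝ} {w : ℂ}

lemma abs_cos_mul_im_le_sin_mul_re (hc : 0 < cos ω) (hw : w ∈ sector ω) :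
    |cos ω * w.im| ≤ sin ω * w.re := by
  have h := hw.2
  rw [tan_eq_sin_div_cos, div_mul_eq_mul_div, le_div_iff₀ hc] at h
  rw [abs_mul, abs_of_pos hc]
  linarith

/-- The distance from `b i` to the sector `S_ω` is at least `|b| cos ω`. -/
lemma sq_cos_mul_le_of_mem_sector (hc : 0 < cos ω) (hw : w ∈ sector ω) (b : ℝ) :
    (cos ω * b) ^ 2 ≤ w.re ^ 2 + (b - w.im) ^ 2 := by
  obtain ⟨hlow, hup⟩ := abs_le.mp (abs_cos_mul_im_le_sin_mul_re hc hw)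
  have hsc := sin_sq_add_cos_sq ω
  -- Cauchy–Schwarz against the unit normal `(sin ω, ± cos ω)` of the edge of the sector
  rcases le_total 0 b with hb | hb
  · nlinarith [sq_nonneg (cos ω * w.re - sin ω * (b - w.im)), mul_nonneg hc.le hb]
  · nlinarith [sq_nonneg (cos ω * w.re + sin ω * (b - w.im)),
      mul_nonpos_of_nonneg_of_nonpos hc.le hb]

lemma cos_mul_norm_le_norm_sub_of_mem_sector (hc : 0 < cos ω) (hw : w ∈ sector ω) {l : ℂ}
    (hl : l.re ≤ 0) : cos ω * ‖l‖ ≤ ‖l - w‖ := by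
  refine le_of_pow_le_pow_left₀ two_ne_zero (norm_nonneg _) ?_
  have him := sq_cos_mul_le_of_mem_sector hc hw l.im
  have hcos : cos ω ^ 2 ≤ 1 := cos_sq_le_one ω
  have hrew : l.re * w.re ≤ 0 := mul_nonpos_of_nonpos_of_nonneg hl hw.1
  simp only [mul_pow, Complex.sq_norm, Complex.normSq_apply, Complex.sub_re, Complex.sub_im]
  nlinarith [mul_le_mul_of_nonneg_right hcos (sq_nonneg l.re)]

end Sector

open Real Complex

theorem weak_resolvent_bound_sectorial_general
    {X Y : Type*} [NormedAddCommGroup X] [InnerProductSpace ℂ X]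
    [NormedAddCommGroup Y] [NormedSpace ℂ Y]
    (j : Y →ₗ[ℂ] X)
    (B : Y → Y → ℂ) (ω : ℝ) (hω0 : 0 ≤ ω) (hωlt : ω < π / 2)
    (hsect : ∀ v : Y, 0 ≤ (B v v).re ∧ |(B v v).im| ≤ Real.tan ω * (B v v).re)
    (z : ℂ) (hz : z.re < 0) (f : X) (u : Y)
    (heq : ∀ φ : Y, B u φ - z * (inner ℂ (j φ) (j u) : ℂ) = (inner ℂ (j φ) f : ℂ)) :
    ‖z‖ * ‖j u‖ ≤ (Real.cos ω)⁻¹ * ‖f‖ := by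
  have hc : 0 < Real.cos ω := Real.cos_pos_of_mem_Ioo ⟨by linarith [pi_pos], hωlt⟩
  have hself := heq u
  rw [inner_self_eq_norm_sq_to_K, RCLike.ofReal_eq_complex_ofReal] at hself
  have hre : (z * (‖j u‖ : ℂ) ^ 2).re ≤ 0 := by
    rw [← ofReal_pow, re_mul_ofReal]
    exact mul_nonpos_of_nonpos_of_nonneg hz.le (sq_nonneg _)
  have hquad : Real.cos ω * (‖z‖ * ‖j u‖ ^ 2) ≤ ‖j u‖ * ‖f‖ :=
    calc Real.cos ω * (‖z‖ * ‖j u‖ ^ 2) = Real.cos ω * ‖z * (‖j u‖ : ℂ) ^ 2‖ := by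
          rw [norm_mul, norm_pow, norm_real, norm_norm]
      _ ≤ ‖z * (‖j u‖ : ℂ) ^ 2 - B u u‖ :=
          cos_mul_norm_le_norm_sub_of_mem_sector hc (hsect u) hre
      _ = ‖inner ℂ (j u) f‖ := by rw [← hself, norm_sub_rev]
      _ ≤ ‖j u‖ * ‖f‖ := norm_inner_le_norm _ _
  rw [inv_mul_eq_div, le_div_iff₀ hc]
  rcases (norm_nonneg (j u)).eq_or_lt with ht | ht
  · rw [← ht, mul_zero, zero_mul]
    positivity
  · nlinarith

/-- Sectorial resolvent estimate (2.4) in weak form: if the numerical range of `B`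
lies in the sector `S_ω` (i.e. `Re B(v,v) ≥ 0` and `|Im B(v,v)| ≤ tan ω · Re B(v,v)`),
`‖j v‖_X ≤ ‖v‖_Y`, `Re z < 0`, and `u` solves
`B(u, φ) − z ⟨j u, j φ⟩_X = ⟨f, j φ⟩_X` for all `φ ∈ Y` (the inner products being
linear in the first and conjugate-linear in the second slot), then
`|z| ‖j u‖_X ≤ (cos ω)⁻¹ ‖f‖_X`. -/
theorem weak_resolvent_bound_sectorial
    {X Y : Type*} [NormedAddCommGroup X] [InnerProductSpace ℂ X]
    [NormedAddCommGroup Y] [NormedSpace ℂ Y]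
    (j : Y →ₗ[ℂ] X) (hj : ∀ v : Y, ‖j v‖ ≤ ‖v‖)
    (B : Y → Y → ℂ) (ω : ℝ) (hω0 : 0 ≤ ω) (hωlt : ω < π / 2)
    (hsect : ∀ v : Y, 0 ≤ (B v v).re ∧ |(B v v).im| ≤ Real.tan ω * (B v v).re)
    (z : ℂ) (hz : z.re < 0) (f : X) (u : Y)
    (heq : ∀ φ : Y, B u φ - z * (inner ℂ (j φ) (j u) : ℂ) = (inner ℂ (j φ) f : ℂ)) :
    ‖z‖ * ‖j u‖ ≤ (Real.cos ω)⁻¹ * ‖f‖ :=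
  weak_resolvent_bound_sectorial_general j B ω hω0 hωlt hsect z hz f u heq
end
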